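/- arXiv:0803.3764 — 2 statements merged into one kernel-verified Lean document; each statement's English description precedes it below -/
import Mathlib

section
/- Let p be a prime and d ≥ 1. (a) If ν is a partition of pd with at most n parts and c_1(ν) = 0, then every part of ν is divisible by p. (b) For any partition μ of d with at most n parts, the partition pμ := (pμ_1, …, pμ_n) of pd satisfies c_1(pμ) = 0 and c_{i+1}(pμ) = c_i(μ) for all i ≥ 1. -/
/-- `l` is a partition of `d` with at most `n` parts: a weakly decreasing tuple
(indexed from 0, vanishing from index `n` on) of nonnegative integers summing to `d`. -/
def IsPartition (n d : ℕ) (l : ℕ → ℕ) : Prop :=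
  Antitone l ∧ (∀ i, n ≤ i → l i = 0) ∧ ∑ i ∈ Finset.range n, l i = d

/-- `carry p n β i` is `c_{i+1}(β)`, the amount carried past the `p^(i+1)`-column when
`β 0, …, β (n-1)` are added in base `p`. -/
def carry (p n : ℕ) (β : ℕ → ℕ) (i : ℕ) : ℕ :=
  (∑ j ∈ Finset.range n, β j % p ^ (i + 1)) / p ^ (i + 1)

/-!
The first carry of `β` is `(∑ β j % p) / p`, so it vanishes exactly when the residues mod `p`
sum to less than `p`; if `p ∣ ∑ β j` that sum of residues is also divisible by `p`, hence zero.
Multiplying every part by `p` shifts all base-`p` digits one column up, which shifts the carry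
pattern by one place and makes the first carry zero.
-/

theorem dvd_of_carry_zero_eq_zero {p n : ℕ} {β : ℕ → ℕ} (hp : 0 < p)
    (hsum : p ∣ ∑ j ∈ Finset.range n, β j) (hcarry : carry p n β 0 = 0) {j : ℕ} (hj : j < n) :
    p ∣ β j := by
  have hlt : ∑ j ∈ Finset.range n, β j % p < p := by
    simpa [carry, hp.ne'] using hcarry
  have hdvd : p ∣ ∑ j ∈ Finset.range n, β j % p := by
    rwa [Nat.dvd_iff_mod_eq_zero, ← Finset.sum_nat_mod, ← Nat.dvd_iff_mod_eq_zero]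
  have hzero := Finset.sum_eq_zero_iff.mp (Nat.eq_zero_of_dvd_of_lt hdvd hlt) j
    (Finset.mem_range.mpr hj)
  exact Nat.dvd_of_mod_eq_zero hzero

theorem carry_mul_left_zero (p n : ℕ) (β : ℕ → ℕ) : carry p n (fun j => p * β j) 0 = 0 := by
  simp [carry, Nat.mul_mod_right]

theorem carry_mul_left_succ {p : ℕ} (hp : 0 < p) (n : ℕ) (β : ℕ → ℕ) (i : ℕ) :
    carry p n (fun j => p * β j) (i + 1) = carry p n β i := by
  have hshift : ∀ j, p * β j % p ^ (i + 1 + 1) = p * (β j % p ^ (i + 1)) := fun j => by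
    rw [pow_succ', Nat.mul_mod_mul_left]
  simp only [carry, hshift, ← Finset.mul_sum]
  rw [pow_succ' p (i + 1), Nat.mul_div_mul_left _ _ hp]

theorem carry_pattern_of_p_mul_general (p n d : ℕ) (hp : p.Prime) :
    (∀ nu : ℕ → ℕ, IsPartition n (p * d) nu → carry p n nu 0 = 0 → ∀ j, p ∣ nu j) ∧
      (∀ mu : ℕ → ℕ, IsPartition n d mu →
        carry p n (fun j => p * mu j) 0 = 0 ∧
          ∀ i, carry p n (fun j => p * mu j) (i + 1) = carry p n mu i) := by
  refine ⟨fun nu ⟨_, hzero, hsum⟩ hcarry j => ?_,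
    fun mu _ => ⟨carry_mul_left_zero p n mu, carry_mul_left_succ hp.pos n mu⟩⟩
  rcases lt_or_ge j n with hj | hj
  · exact dvd_of_carry_zero_eq_zero hp.pos (hsum ▸ dvd_mul_right p d) hcarry hj
  · rw [hzero j hj]
    exact dvd_zero p

theorem carry_pattern_of_p_mul (p n d : ℕ) (hp : p.Prime) (hd : 1 ≤ d) :
    (∀ nu : ℕ → ℕ, IsPartition n (p * d) nu → carry p n nu 0 = 0 → ∀ j, p ∣ nu j) ∧
      (∀ mu : ℕ → ℕ, IsPartition n d mu →
        carry p n (fun j => p * mu j) 0 = 0 ∧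
          ∀ i, carry p n (fun j => p * mu j) (i + 1) = carry p n mu i) :=
  carry_pattern_of_p_mul_general p n d hp
end

section
/- Let p be an odd prime and let λ_1 > λ_2 ≥ 1 be integers. Then λ_2 ∈ Ψ_p(λ_1 − λ_2) if and only if either λ_1 ≡ −1 (mod p^{l_p(λ_2)}) or (λ_1, λ_2) satisfies condition (ii). (This is the combinatorial content of Proposition 5.4, which characterizes when H^1(Σ_d, S^{(λ_1,λ_2)}) is nonzero.) -/
/-- The `i`-th base-`p` digit of `r`. -/
def pdigit (p r i : ℕ) : ℕ := (r / p ^ i) % p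

/-- For a base-`p` digit `a`, `pbar p a = p - 1 - a` is the unique `a̅` with
`0 ≤ a̅ ≤ p - 1` and `a + a̅ ≡ p - 1 (mod p)`. -/
def pbar (p a : ℕ) : ℕ := p - 1 - a

/-- Erdmann's set `Ψ_p(r)`. -/
def Psi (p r : ℕ) : Set ℕ :=
  {m | ∃ u a : ℕ, 1 ≤ a ∧ pdigit p r u ≠ p - 1 ∧
        m = (∑ i ∈ Finset.range u, pbar p (pdigit p r i) * p ^ i) + p ^ (u + a)} ∪
  {m | ∃ u : ℕ, pdigit p r u ≠ p - 1 ∧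
        m = ∑ i ∈ Finset.range (u + 1), pbar p (pdigit p r i) * p ^ i}

/-- `lpexp p t` is the least nonnegative integer `l` with `t < p ^ l`. -/
noncomputable def lpexp (p t : ℕ) : ℕ := sInf {l : ℕ | t < p ^ l}

/-- Condition (ii) of Proposition 5.4. -/
def CondII (p l1 l2 : ℕ) : Prop :=
  ∃ u : ℕ, p ^ u ∣ l1 + 1 ∧ ¬ p ^ (u + 1) ∣ l1 + 1 ∧
    ∃ c b : ℕ, c < p ^ u ∧ u < b ∧ l2 = c + p ^ b

/-!
With `r = λ₁ - λ₂`, the sum `∑_{i<n} r̅ᵢ pⁱ` equals `pⁿ - 1 - (r mod pⁿ)`, so `λ₂` is such a sum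
exactly when `λ₂ < pⁿ` and `pⁿ ∣ λ₂ + r + 1 = λ₁ + 1`. Given this, the digit condition
`r_u ≠ p - 1` turns into a condition on `λ₁ + 1` or on `λ₂`: in the first family of `Ψ_p(r)` it says
`p^{u+1} ∤ λ₁ + 1`, which is condition (ii); in the second it says `p^u ≤ λ₂ < p^{u+1}`, i.e.
`u + 1 = l_p(λ₂)`, which is James's condition `λ₁ ≡ -1 (mod p^{l_p(λ₂)})`.
-/

open Finset

theorem Nat.add_mod_add_one_eq_iff {N x r : ℕ} (hN : 0 < N) :
    x + r % N + 1 = N ↔ x < N ∧ N ∣ x + r + 1 := by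
  have hr := Nat.div_add_mod r N
  constructor
  · intro h
    exact ⟨by omega, r / N + 1, by rw [mul_add, mul_one]; omega⟩
  · rintro ⟨hx, hdvd⟩
    have hdvd' : N ∣ x + r % N + 1 :=
      (Nat.dvd_add_right (dvd_mul_right N (r / N))).mp (by convert hdvd using 1; omega)
    exact Nat.eq_of_dvd_of_lt_two_mul (by omega) hdvd' (by have := Nat.mod_lt r hN; omega)

theorem Nat.dvd_add_one_iff_mod_eq_pred {p q : ℕ} (hp : 0 < p) : p ∣ q + 1 ↔ q % p = p - 1 := by
  have hq := Nat.mod_lt q hp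
  conv_lhs => rw [← Nat.div_add_mod q p, add_assoc, Nat.dvd_add_right (dvd_mul_right _ _)]
  constructor
  · intro h
    have := Nat.eq_of_dvd_of_lt_two_mul (by omega) h (by omega)
    omega
  · intro h
    rw [h, Nat.sub_add_cancel hp]

section

variable {p : ℕ}

theorem pbar_add_pdigit_add_one (hp : 0 < p) (r i : ℕ) :
    pbar p (pdigit p r i) + pdigit p r i + 1 = p := by
  have := Nat.mod_lt (r / p ^ i) hp
  unfold pbar pdigit
  omega

theorem sum_pbar_add_mod_add_one (hp : 0 < p) (r n : ℕ) :
    (∑ i ∈ range n, pbar p (pdigit p r i) * p ^ i) + r % p ^ n + 1 = p ^ n := by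
  induction n with
  | zero => simp [Nat.mod_one]
  | succ n ih =>
    have hdigit : (pbar p (pdigit p r n) + pdigit p r n + 1) * p ^ n = p ^ (n + 1) := by
      rw [pbar_add_pdigit_add_one hp, pow_succ, mul_comm]
    rw [sum_range_succ, Nat.mod_pow_succ, ← hdigit]
    change _ + (_ + p ^ n * pdigit p r n) + 1 = _
    linarith

theorem eq_sum_pbar_iff (hp : 0 < p) {x r n : ℕ} :
    x = ∑ i ∈ range n, pbar p (pdigit p r i) * p ^ i ↔ x < p ^ n ∧ p ^ n ∣ x + r + 1 := by
  have hsum := sum_pbar_add_mod_add_one hp r n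
  rw [← Nat.add_mod_add_one_eq_iff (Nat.pow_pos hp)]
  omega

theorem pdigit_eq_pred_iff_dvd (hp : 0 < p) {c r u : ℕ} (hc : c + r % p ^ u + 1 = p ^ u) :
    pdigit p r u = p - 1 ↔ p ^ (u + 1) ∣ c + r + 1 := by
  have hr := Nat.div_add_mod r (p ^ u)
  have hsplit : c + r + 1 = p ^ u * (r / p ^ u + 1) := by rw [mul_add]; omega
  rw [hsplit, pow_succ, Nat.mul_dvd_mul_iff_left (Nat.pow_pos hp),
    Nat.dvd_add_one_iff_mod_eq_pred hp, pdigit]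

theorem pdigit_eq_pred_iff_lt (hp : 0 < p) {x r u : ℕ}
    (hx : x + r % p ^ (u + 1) + 1 = p ^ (u + 1)) : pdigit p r u = p - 1 ↔ x < p ^ u := by
  have hdigit : pdigit p r u < p := Nat.mod_lt _ hp
  have hlow := Nat.mod_lt r (Nat.pow_pos (n := u) hp)
  rw [Nat.mod_pow_succ, pow_succ] at hx
  change x + (r % p ^ u + p ^ u * pdigit p r u) + 1 = p ^ u * p at hx
  constructor
  · intro h
    have hp' : p ^ u * p = p ^ u * pdigit p r u + p ^ u := by
      rw [h, ← mul_add_one, Nat.sub_one_add_one hp.ne']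
    linarith [Nat.zero_le (r % p ^ u)]
  · intro h
    by_contra hne
    have := Nat.mul_le_mul_left (p ^ u) (show pdigit p r u + 2 ≤ p by omega)
    nlinarith

theorem lpexp_eq_log_add_one {t : ℕ} (hp : 1 < p) (ht : t ≠ 0) : lpexp p t = Nat.log p t + 1 := by
  refine le_antisymm (Nat.sInf_le (Nat.lt_pow_succ_log_self hp t)) (le_csInf ?_ fun l hl => ?_)
  · exact ⟨_, Nat.lt_pow_succ_log_self hp t⟩
  · by_contra! hle
    have := Nat.pow_le_pow_right (by omega : 0 < p) (Nat.lt_succ_iff.mp hle)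
    have := Nat.pow_log_le_self p ht
    have hl' : t < p ^ l := hl
    omega

theorem exists_eq_sum_pbar_add_pow_iff_condII (hp : 0 < p) {m r : ℕ} :
    (∃ u a : ℕ, 1 ≤ a ∧ pdigit p r u ≠ p - 1 ∧
        m = (∑ i ∈ range u, pbar p (pdigit p r i) * p ^ i) + p ^ (u + a)) ↔
      CondII p (m + r) m := by
  have hsplit : ∀ c b, c + p ^ b + r + 1 = (c + r + 1) + p ^ b := fun _ _ => by ring
  constructor
  · rintro ⟨u, a, ha, hdigit, rfl⟩
    set c := ∑ i ∈ range u, pbar p (pdigit p r i) * p ^ i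
    have hc := sum_pbar_add_mod_add_one hp r u
    obtain ⟨hclt, hcdvd⟩ := (eq_sum_pbar_iff hp).mp (rfl : c = _)
    refine ⟨u, ?_, ?_, c, u + a, hclt, by omega, rfl⟩
    · rw [hsplit]
      exact dvd_add hcdvd (pow_dvd_pow p (by omega))
    · rwa [hsplit, Nat.dvd_add_left (pow_dvd_pow p (by omega)), ← pdigit_eq_pred_iff_dvd hp hc]
  · rintro ⟨u, hdvd, hndvd, c, b, hclt, hub, rfl⟩
    rw [hsplit] at hdvd hndvd
    have hcdvd : p ^ u ∣ c + r + 1 := (Nat.dvd_add_left (pow_dvd_pow p hub.le)).mp hdvd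
    have hc := (Nat.add_mod_add_one_eq_iff (Nat.pow_pos hp)).mpr ⟨hclt, hcdvd⟩
    refine ⟨u, b - u, by omega, ?_, ?_⟩
    · rwa [ne_eq, pdigit_eq_pred_iff_dvd hp hc, ← Nat.dvd_add_left (pow_dvd_pow p hub)]
    · rw [Nat.add_sub_cancel' hub.le, (eq_sum_pbar_iff hp).mpr ⟨hclt, hcdvd⟩]

theorem exists_eq_sum_pbar_iff_dvd (hp : 1 < p) {m r : ℕ} (hm : m ≠ 0) :
    (∃ u : ℕ, pdigit p r u ≠ p - 1 ∧ m = ∑ i ∈ range (u + 1), pbar p (pdigit p r i) * p ^ i) ↔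
      p ^ lpexp p m ∣ m + r + 1 := by
  rw [lpexp_eq_log_add_one hp hm]
  constructor
  · rintro ⟨u, hdigit, hsum⟩
    obtain ⟨hlt, hdvd⟩ := (eq_sum_pbar_iff (by omega)).mp hsum
    have hx := (Nat.add_mod_add_one_eq_iff (Nat.pow_pos (by omega))).mpr ⟨hlt, hdvd⟩
    have hle : p ^ u ≤ m :=
      not_lt.mp fun h => hdigit ((pdigit_eq_pred_iff_lt (by omega) hx).mpr h)
    rwa [Nat.log_eq_of_pow_le_of_lt_pow hle hlt]
  · intro hdvd
    have hlt := Nat.lt_pow_succ_log_self hp m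
    have hx := (Nat.add_mod_add_one_eq_iff (Nat.pow_pos (by omega))).mpr ⟨hlt, hdvd⟩
    refine ⟨Nat.log p m, fun h => ?_, (eq_sum_pbar_iff (by omega)).mpr ⟨hlt, hdvd⟩⟩
    exact (Nat.pow_log_le_self p hm).not_gt ((pdigit_eq_pred_iff_lt (by omega) hx).mp h)

theorem mem_Psi_iff (hp : 1 < p) {m r : ℕ} (hm : m ≠ 0) :
    m ∈ Psi p r ↔ p ^ lpexp p m ∣ m + r + 1 ∨ CondII p (m + r) m :=
  (or_congr (exists_eq_sum_pbar_add_pow_iff_condII (by omega))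
    (exists_eq_sum_pbar_iff_dvd hp hm)).trans or_comm

end

theorem mem_Psi_iff_james_or_condII_general (p l1 l2 : ℕ) (hp : p.Prime)
    (h12 : l2 < l1) (h2 : 1 ≤ l2) :
    l2 ∈ Psi p (l1 - l2) ↔ (p ^ lpexp p l2 ∣ l1 + 1 ∨ CondII p l1 l2) := by
  rw [mem_Psi_iff hp.one_lt (by omega), Nat.add_sub_cancel' h12.le]

theorem mem_Psi_iff_james_or_condII (p l1 l2 : ℕ) (hp : p.Prime) (hodd : Odd p)
    (h12 : l2 < l1) (h2 : 1 ≤ l2) :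
    l2 ∈ Psi p (l1 - l2) ↔ (p ^ lpexp p l2 ∣ l1 + 1 ∨ CondII p l1 l2) :=
  mem_Psi_iff_james_or_condII_general p l1 l2 hp h12 h2
end
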